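/- Under the stated assumptions, for each fixed τ ∈ ℝ the solutions r_{n,τ} of r g_n'(r) = 2τ satisfy r_{n,τ} = 1 − (ρ²/(4n))(1 − 2τ) + o(n^{−1}) as n → ∞; equivalently, lim_{n→∞} n·(r_{n,τ} − 1) = (ρ²/4)(2τ − 1). -/

import Mathlib

/-!
Put `F_n(x) = x g_n'(x)`, so that `F_n(1) = 1`, `F_n(r_{n,τ}) = 2τ` and
`F_n' = g_n' + x g_n'' = 4x ΔQ_n`. Strict subharmonicity gives `F_n' ≥ 2δn` near `1`, hence
`|r_{n,τ} - 1| ≤ |2τ - 1| / (2δn)`. The third-derivative bound gives `|F_n''| = O(n)` near `1`, so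
the first-order Taylor expansion of `F_n` at `1` has remainder `O(n · n⁻²) = O(n⁻¹)`:
`2τ - 1 = F_n'(1) (r_{n,τ} - 1) + O(n⁻¹)`. Since `F_n'(1) / n = 4 ΔQ_n(1) / n → 4 / ρ²`,
multiplying by `n / F_n'(1)` gives `n (r_{n,τ} - 1) → (ρ² / 4)(2τ - 1)`.
-/

open Filter Real Set Topology

noncomputable section

/-- The quarter-Laplacian `ΔQ_n(1) = (g_n''(1) + 1)/4` of the radial potential `Q_n(ζ) = g_n(|ζ|)`,
using that `g_n'(1) = 1`. -/
def lapQ (g : ℕ → ℝ → ℝ) (n : ℕ) : ℝ := (deriv (deriv (g n)) 1 + 1) / 4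

namespace Convex

variable {s : Set ℝ} {f f' f'' : ℝ → ℝ} {x y : ℝ}

theorem abs_image_sub_le_of_abs_hasDerivAt_le (hs : Convex ℝ s)
    (hf : ∀ z ∈ s, HasDerivAt f (f' z) z) {M : ℝ} (hM : ∀ z ∈ s, |f' z| ≤ M)
    (hx : x ∈ s) (hy : y ∈ s) : |f y - f x| ≤ M * |y - x| :=
  hs.norm_image_sub_le_of_norm_hasDerivWithin_le (fun z hz => (hf z hz).hasDerivWithinAt) hM hx hy

theorem mul_abs_sub_le_abs_image_sub_of_le_hasDerivAt (hs : Convex ℝ s)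
    (hf : ∀ z ∈ s, HasDerivAt f (f' z) z) {m : ℝ} (hm : ∀ z ∈ s, m ≤ f' z)
    (hx : x ∈ s) (hy : y ∈ s) : m * |y - x| ≤ |f y - f x| := by
  have hmono := hs.mul_sub_le_image_sub_of_le_deriv
    (fun z hz => (hf z hz).continuousAt.continuousWithinAt)
    (fun z hz => (hf z (interior_subset hz)).differentiableAt.differentiableWithinAt)
    (fun z hz => (hf z (interior_subset hz)).deriv ▸ hm z (interior_subset hz))
  rcases le_total x y with hxy | hyx
  · rw [abs_of_nonneg (sub_nonneg.2 hxy)]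
    exact (hmono x hx y hy hxy).trans (le_abs_self _)
  · rw [abs_sub_comm, abs_of_nonneg (sub_nonneg.2 hyx), abs_sub_comm]
    exact (hmono y hy x hx hyx).trans (le_abs_self _)

theorem abs_image_sub_sub_mul_le_sq (hs : Convex ℝ s)
    (hf : ∀ z ∈ s, HasDerivAt f (f' z) z) (hf' : ∀ z ∈ s, HasDerivAt f' (f'' z) z)
    {M : ℝ} (hM : ∀ z ∈ s, |f'' z| ≤ M) (hx : x ∈ s) (hy : y ∈ s) :
    |f y - f x - f' x * (y - x)| ≤ M * |y - x| ^ 2 := by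
  have hseg : uIcc x y ⊆ s := segment_eq_uIcc x y ▸ hs.segment_subset hx hy
  have hM0 : 0 ≤ M := (abs_nonneg _).trans (hM x hx)
  have hslope : ∀ z ∈ uIcc x y, |f' z - f' x| ≤ M * |y - x| := fun z hz =>
    (hs.abs_image_sub_le_of_abs_hasDerivAt_le hf' hM hx (hseg hz)).trans
      (mul_le_mul_of_nonneg_left (abs_sub_left_of_mem_uIcc hz) hM0)
  have hlin := (convex_uIcc x y).abs_image_sub_le_of_abs_hasDerivAt_le
    (f := fun z => f z - f' x * z) (fun z hz => (hf z (hseg hz)).sub (hasDerivAt_const_mul (f' x)))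
    hslope left_mem_uIcc right_mem_uIcc
  calc |f y - f x - f' x * (y - x)| = |(f y - f' x * y) - (f x - f' x * x)| := by ring_nf
    _ ≤ M * |y - x| * |y - x| := hlin
    _ = M * |y - x| ^ 2 := by ring

end Convex

theorem tendsto_sq_of_tendsto_sqrt {α : Type*} {l : Filter α} {u : α → ℝ} {ρ : ℝ}
    (h : Tendsto (fun a => √(u a)) l (𝓝 ρ)) (hρ : 0 < ρ) : Tendsto u l (𝓝 (ρ ^ 2)) :=
  (h.pow 2).congr' <| (h.eventually_const_lt hρ).mono fun _ ha =>
    sq_sqrt (sqrt_pos.1 ha).le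

theorem tendsto_nat_mul_of_abs_sub_mul_le {b e : ℕ → ℝ} {y L E : ℝ}
    (hb : Tendsto (fun n => b n / n) atTop (𝓝 L)) (hL : L ≠ 0)
    (he : ∀ᶠ n in atTop, |y - b n * e n| ≤ E / n) :
    Tendsto (fun n => n * e n) atTop (𝓝 (y / L)) := by
  have hbe : Tendsto (fun n => b n * e n) atTop (𝓝 y) := by
    rw [tendsto_iff_norm_sub_tendsto_zero]
    refine squeeze_zero' (.of_forall fun _ => norm_nonneg _) ?_
      (tendsto_const_div_atTop_nhds_zero_nat E)
    filter_upwards [he] with n hn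
    rwa [norm_sub_rev]
  refine (hbe.div hb hL).congr' ?_
  filter_upwards [hb.eventually_ne hL, eventually_ne_atTop 0] with n hbn hn
  have hn' : (n : ℝ) ≠ 0 := Nat.cast_ne_zero.2 hn
  have hb' : b n ≠ 0 := (div_ne_zero_iff.1 hbn).1
  simp only [Pi.div_apply]
  field_simp

theorem tendsto_nat_mul_sub_of_hasDerivAt_bounds {s : Set ℝ} (hs : Convex ℝ s)
    {F F' F'' : ℕ → ℝ → ℝ} {x : ℕ → ℝ} {x₀ y L m M : ℝ} (hx₀ : x₀ ∈ s) (hm : 0 < m)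
    (hF : ∀ n, ∀ z ∈ s, HasDerivAt (F n) (F' n z) z)
    (hF' : ∀ n, ∀ z ∈ s, HasDerivAt (F' n) (F'' n z) z)
    (hF'_ge : ∀ n : ℕ, ∀ z ∈ s, m * n ≤ F' n z)
    (hF''_le : ∀ᶠ n : ℕ in atTop, ∀ z ∈ s, |F'' n z| ≤ M * n)
    (hL : Tendsto (fun n => F' n x₀ / n) atTop (𝓝 L))
    (hx : ∀ᶠ n in atTop, x n ∈ s) (hy : ∀ᶠ n in atTop, F n (x n) - F n x₀ = y) :
    Tendsto (fun n => n * (x n - x₀)) atTop (𝓝 (y / L)) := by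
  have hmL : m ≤ L := ge_of_tendsto hL <| by
    filter_upwards [eventually_gt_atTop 0] with n hn
    exact (le_div_iff₀ (Nat.cast_pos.2 hn)).2 (hF'_ge n x₀ hx₀)
  refine tendsto_nat_mul_of_abs_sub_mul_le hL (by linarith) (E := M * y ^ 2 / m ^ 2) ?_
  filter_upwards [hF''_le, hx, hy, eventually_gt_atTop 0] with n hM hxn hyn hn
  have hmn : 0 < m * n := mul_pos hm (Nat.cast_pos.2 hn)
  have hMn : 0 ≤ M * n := (abs_nonneg _).trans (hM x₀ hx₀)
  have hlin := hs.abs_image_sub_sub_mul_le_sq (hF n) (hF' n) hM hx₀ hxn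
  have hlow := hs.mul_abs_sub_le_abs_image_sub_of_le_hasDerivAt (hF n) (hF'_ge n) hx₀ hxn
  rw [hyn] at hlin hlow
  have hdist : |x n - x₀| ≤ |y| / (m * n) := (le_div_iff₀ hmn).2 (by linarith)
  calc |y - F' n x₀ * (x n - x₀)| ≤ M * n * |x n - x₀| ^ 2 := hlin
    _ ≤ M * n * (|y| / (m * n)) ^ 2 := by gcongr
    _ = M * y ^ 2 / m ^ 2 / n := by
      rw [div_pow, sq_abs]
      field_simp

theorem HasDerivAt.id_mul {u : ℝ → ℝ} {u' x : ℝ} (hu : HasDerivAt u u' x) :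
    HasDerivAt (fun y => y * u y) (u x + x * u') x :=
  ((hasDerivAt_id' x).mul hu).congr_deriv (by ring)

theorem ContDiffOn.hasDerivAt_deriv {f : ℝ → ℝ} {s : Set ℝ} {k : WithTop ℕ∞}
    (hf : ContDiffOn ℝ k f s) (hs : IsOpen s) (hk : 2 ≤ k) {x : ℝ} (hx : x ∈ s) :
    HasDerivAt (deriv f) (deriv (deriv f) x) x :=
  (((hf.deriv_of_isOpen hs (m := 1) ((show (1 : WithTop ℕ∞) + 1 = 2 by norm_num).trans_le hk)
    ).differentiableOn one_ne_zero).differentiableAt (hs.mem_nhds hx)).hasDerivAt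

theorem ContDiffOn.hasDerivAt_deriv_deriv {f : ℝ → ℝ} {s : Set ℝ} {k : WithTop ℕ∞}
    (hf : ContDiffOn ℝ k f s) (hs : IsOpen s) (hk : 3 ≤ k) {x : ℝ} (hx : x ∈ s) :
    HasDerivAt (deriv (deriv f)) (deriv (deriv (deriv f)) x) x :=
  (hf.deriv_of_isOpen hs (m := 2) ((show (2 : WithTop ℕ∞) + 1 = 3 by norm_num).trans_le hk)
    ).hasDerivAt_deriv hs le_rfl hx

theorem two_mul_le_add_mul_of_le_add_div {a b d x : ℝ} (hx : 1 / 2 ≤ x) (hd : 0 ≤ d)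
    (h : d ≤ (b + a / x) / 4) : 2 * d ≤ a + x * b := by
  have hxab : a + x * b = x * (b + a / x) := by field_simp; ring
  nlinarith

/-- For `h = g''` the left-hand side is `F''(z)`, where `F(x) = x g'(x)`. -/
theorem abs_add_add_mul_le {s : Set ℝ} (hs : Convex ℝ s) (hs_Icc : s ⊆ Icc 0 2) (h1s : 1 ∈ s)
    {h h' : ℝ → ℝ} (hh : ∀ z ∈ s, HasDerivAt h (h' z) z) {K : ℝ} (hK : ∀ z ∈ s, |h' z| ≤ K)
    {z : ℝ} (hz : z ∈ s) : |h z + (h z + z * h' z)| ≤ 2 * |h 1| + 4 * K := by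
  obtain ⟨hz₀, hz₂⟩ := hs_Icc hz
  have hK₀ : 0 ≤ K := (abs_nonneg _).trans (hK z hz)
  have hhz : |h z - h 1| ≤ K := (hs.abs_image_sub_le_of_abs_hasDerivAt_le hh hK h1s hz).trans
    (mul_le_of_le_one_right hK₀ (abs_le.2 ⟨by linarith, by linarith⟩))
  have hzh' : |z * h' z| ≤ 2 * K := by
    rw [abs_mul, abs_of_nonneg hz₀]
    exact mul_le_mul hz₂ (hK z hz) (abs_nonneg _) zero_le_two
  have := abs_sub_abs_le_abs_sub (h z) (h 1)
  have := abs_add_le (h z) (h z + z * h' z)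
  have := abs_add_le (h z) (z * h' z)
  linarith

theorem exists_eventually_abs_add_add_mul_le {s : Set ℝ} (hs : Convex ℝ s)
    (hs_Icc : s ⊆ Icc 0 2) (h1s : 1 ∈ s) {h h' : ℕ → ℝ → ℝ}
    (hh : ∀ n, ∀ z ∈ s, HasDerivAt (h n) (h' n z) z) {C : ℝ}
    (hC : ∀ n : ℕ, ∀ z ∈ s, |h' n z| ≤ C * n) {L : ℝ}
    (hL : Tendsto (fun n : ℕ => h n 1 / n) atTop (𝓝 L)) :
    ∃ M, ∀ᶠ n : ℕ in atTop, ∀ z ∈ s, |h n z + (h n z + z * h' n z)| ≤ M * n := by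
  refine ⟨2 * (|L| + 1) + 4 * C, ?_⟩
  filter_upwards [hL.abs.eventually_lt_const (lt_add_one |L|), eventually_gt_atTop 0]
    with n hn hn₀ z hz
  have hn' : (0 : ℝ) < n := Nat.cast_pos.2 hn₀
  rw [abs_div, Nat.abs_cast, div_lt_iff₀ hn'] at hn
  linarith [abs_add_add_mul_le hs hs_Icc h1s (hh n) (hC n) hz]

theorem tendsto_lapQ_div {g : ℕ → ℝ → ℝ} {ρ : ℝ}
    (hρlim : Tendsto (fun n : ℕ => √(n / lapQ g n)) atTop (𝓝 ρ)) (hρ : 0 < ρ) :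
    Tendsto (fun n : ℕ => lapQ g n / n) atTop (𝓝 (ρ ^ 2)⁻¹) := by
  simpa [inv_div] using (tendsto_sq_of_tendsto_sqrt hρlim hρ).inv₀ (by positivity)

theorem r_tau_asymptotics_general
    (g : ℕ → ℝ → ℝ) (ρ C : ℝ) (r : ℕ → ℝ → ℝ) (τ : ℝ)
    (hg_smooth : ∀ n, ContDiffOn ℝ 3 (g n) (Set.Ioi (0:ℝ)))
    (hg'1 : ∀ n, deriv (g n) 1 = 1)
    (hstrict : ∃ ε > (0:ℝ), ∃ δ > (0:ℝ), ∀ n : ℕ, ∀ x ∈ Set.Ioo (1-ε) (1+ε),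
        δ * n ≤ (deriv (deriv (g n)) x + deriv (g n) x / x) / 4)
    (hthird : ∃ ε > (0:ℝ), ∀ n : ℕ, ∀ x ∈ Set.Ioo (1-ε) (1+ε),
        |deriv (deriv (deriv (g n))) x| ≤ C * n)
    (hρ : 0 < ρ)
    (hρlim : Tendsto (fun n : ℕ => Real.sqrt (n / lapQ g n)) atTop (nhds ρ))
    (hr_eq : ∀ σ : ℝ, ∀ᶠ n in atTop, r n σ * deriv (g n) (r n σ) = 2 * σ)
    (hr_lim : ∀ σ : ℝ, Tendsto (fun n => r n σ) atTop (nhds 1)) :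
    Tendsto (fun n : ℕ => (n : ℝ) * (r n τ - 1)) atTop (nhds (ρ^2 / 4 * (2*τ - 1))) := by
  obtain ⟨ε₁, hε₁, δ, hδ, hstrict⟩ := hstrict
  obtain ⟨ε₂, hε₂, hthird⟩ := hthird
  obtain ⟨ε, hε, hεε₁, hεε₂, hε_half⟩ : ∃ ε > (0 : ℝ), ε ≤ ε₁ ∧ ε ≤ ε₂ ∧ ε ≤ 1 / 2 :=
    ⟨min (min ε₁ ε₂) (1 / 2), by positivity, by simp, by simp, by simp⟩
  set s := Ioo (1 - ε) (1 + ε)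
  have h1s : 1 ∈ s := ⟨by linarith, by linarith⟩
  have hs_Icc : s ⊆ Icc (1 / 2) 2 := fun z hz => ⟨by linarith [hz.1], by linarith [hz.2]⟩
  have hs_pos : s ⊆ Ioi 0 := fun z hz => lt_of_lt_of_le one_half_pos (hs_Icc hz).1
  have hg' := fun n (z : ℝ) (hz : z ∈ s) =>
    (hg_smooth n).hasDerivAt_deriv isOpen_Ioi (by norm_num) (hs_pos hz)
  have hg'' := fun n (z : ℝ) (hz : z ∈ s) =>
    (hg_smooth n).hasDerivAt_deriv_deriv isOpen_Ioi le_rfl (hs_pos hz)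
  have hL : Tendsto (fun n : ℕ => (deriv (g n) 1 + 1 * deriv (deriv (g n)) 1) / n) atTop
      (𝓝 (4 * (ρ ^ 2)⁻¹)) :=
    ((tendsto_lapQ_div hρlim hρ).const_mul 4).congr fun n => by rw [lapQ, hg'1]; ring
  obtain ⟨M, hM⟩ := exists_eventually_abs_add_add_mul_le (convex_Ioo _ _)
    (hs_Icc.trans (Icc_subset_Icc one_half_pos.le le_rfl)) h1s hg''
    (fun n z hz => hthird n z (Ioo_subset_Ioo (by linarith) (by linarith) hz))
    (by simpa using (hL.sub tendsto_one_div_atTop_nhds_zero_nat).congr fun n => by rw [hg'1]; ring)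
  have hF'_ge (n : ℕ) (z : ℝ) (hz : z ∈ s) :
      2 * δ * n ≤ deriv (g n) z + z * deriv (deriv (g n)) z := by
    rw [mul_assoc]
    exact two_mul_le_add_mul_of_le_add_div (hs_Icc hz).1 (by positivity)
      (hstrict n z (Ioo_subset_Ioo (by linarith) (by linarith) hz))
  have hy : ∀ᶠ n in atTop, r n τ * deriv (g n) (r n τ) - 1 * deriv (g n) 1 = 2 * τ - 1 := by
    filter_upwards [hr_eq τ] with n hn
    rw [hn, hg'1]; ring
  convert tendsto_nat_mul_sub_of_hasDerivAt_bounds (convex_Ioo _ _) h1s (mul_pos two_pos hδ)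
    (fun n z hz => (hg' n z hz).id_mul) (fun n z hz => (hg' n z hz).add (hg'' n z hz).id_mul)
    hF'_ge hM hL ((hr_lim τ).eventually (Ioo_mem_nhds (by linarith) (by linarith))) hy using 2
  field_simp

/-- **Lemma 2.1 (asymptotics of `r_{n,τ}`).**
Under the standing assumptions on the family of radially symmetric potentials
`Q_n(ζ) = g_n(|ζ|)`, for each fixed `τ ∈ ℝ` the solutions `r_{n,τ}` of `r gₙ'(r) = 2τ`
(which tend to `1`) satisfy `r_{n,τ} = 1 - (ρ²/(4n))(1 - 2τ) + o(n⁻¹)`, i.e.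
`n (r_{n,τ} - 1) → (ρ²/4)(2τ - 1)` as `n → ∞`. -/
theorem r_tau_asymptotics
    (g : ℕ → ℝ → ℝ) (ρ C : ℝ) (r : ℕ → ℝ → ℝ) (τ : ℝ)
    (hg_smooth : ∀ n, ContDiffOn ℝ 3 (g n) (Set.Ioi (0:ℝ)))
    (hg1 : ∀ n, g n 1 = 0)
    (hg'1 : ∀ n, deriv (g n) 1 = 1)
    (hsub : ∀ n, ∀ x : ℝ, 0 < x → 0 ≤ deriv (deriv (g n)) x + deriv (g n) x / x)
    (hstrict : ∃ ε > (0:ℝ), ∃ δ > (0:ℝ), ∀ n : ℕ, ∀ x ∈ Set.Ioo (1-ε) (1+ε),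
        δ * n ≤ (deriv (deriv (g n)) x + deriv (g n) x / x) / 4)
    (hthird : ∃ ε > (0:ℝ), ∀ n : ℕ, ∀ x ∈ Set.Ioo (1-ε) (1+ε),
        |deriv (deriv (deriv (g n))) x| ≤ C * n)
    (hρ : 0 < ρ)
    (hρlim : Tendsto (fun n : ℕ => Real.sqrt (n / lapQ g n)) atTop (nhds ρ))
    (hr_eq : ∀ σ : ℝ, ∀ᶠ n in atTop, r n σ * deriv (g n) (r n σ) = 2 * σ)
    (hr_lim : ∀ σ : ℝ, Tendsto (fun n => r n σ) atTop (nhds 1)) :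
    Tendsto (fun n : ℕ => (n : ℝ) * (r n τ - 1)) atTop (nhds (ρ^2 / 4 * (2*τ - 1))) :=
  r_tau_asymptotics_general g ρ C r τ hg_smooth hg'1 hstrict hthird hρ hρlim hr_eq hr_lim
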